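/- Let p > 3 be a prime and let G = Φ₂₄(1⁶) be the group of order p⁶ with presentation on generators α, α₁, α₂, α₃, α₄, β and relations [αᵢ,α] = αᵢ₊₁ for i = 1,2,3, [α₁,β] = α₄, αᵖ = βᵖ = 1, and αⱼ^(p) = 1 for j = 1,2,3,4, where αⱼ^(p) denotes αⱼᵖ·αⱼ₊₁^C(p,2)·αⱼ₊₂^C(p,3)·⋯·α₄^C(p,5−j); every commutator of a pair of generators not listed among these relations is declared trivial. Then the Bogomolov multiplier B₀(G) is trivial. -/
import Mathlib


/-!
Φ₂₄(1⁶): relations [αᵢ,α]=αᵢ₊₁ (i=1,2,3), [α₁,β]=α₄, αᵖ=βᵖ=1, αⱼ^(p)=1 (j=1..4).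
-/

namespace Stmt4

/-- The additive group `ℚ/ℤ`. -/
abbrev QZ : Type := ℚ ⧸ AddSubgroup.zmultiples (1 : ℚ)

/-- An inhomogeneous 2-cocycle on `G` with values in `ℚ/ℤ` (trivial `G`-action). -/
def IsTwoCocycle {G : Type} [Group G] (f : G → G → QZ) : Prop :=
  ∀ g h j : G, f h j - f (g * h) j + f g (h * j) - f g h = 0

/-- An inhomogeneous 2-coboundary on `G` with values in `ℚ/ℤ` (trivial `G`-action). -/
def IsTwoCoboundary {G : Type} [Group G] (f : G → G → QZ) : Prop :=
  ∃ c : G → QZ, ∀ g h : G, f g h = c h - c (g * h) + c g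

/-- A subgroup is bicyclic if it is abelian and generated by at most two elements
(equivalently, cyclic or a direct product of two cyclic groups). -/
def IsBicyclic {G : Type} [Group G] (A : Subgroup G) : Prop :=
  (∀ x y : A, x * y = y * x) ∧ ∃ a b : G, A = Subgroup.closure {a, b}

/-- The Bogomolov multiplier `B₀(G) ⊆ H²(G, ℚ/ℤ)` is trivial, phrased at the level of
2-cocycles: every 2-cocycle whose restriction to each bicyclic subgroup is a coboundary
(i.e. whose class restricts to zero on each bicyclic subgroup) is itself a coboundary
(i.e. its class is zero). -/
def BogomolovMultiplierIsTrivial (G : Type) [Group G] : Prop :=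
  ∀ f : G → G → QZ, IsTwoCocycle f →
    (∀ A : Subgroup G, IsBicyclic A → IsTwoCoboundary (fun a b : ↥A => f ↑a ↑b)) →
    IsTwoCoboundary f

/-- The Bogomolov multiplier `B₀(G) ⊆ H²(G, ℚ/ℤ)` is nontrivial, phrased at the level of
2-cocycles. -/
def BogomolovMultiplierIsNontrivial (G : Type) [Group G] : Prop :=
  ∃ f : G → G → QZ, IsTwoCocycle f ∧
    (∀ A : Subgroup G, IsBicyclic A → IsTwoCoboundary (fun a b : ↥A => f ↑a ↑b)) ∧
    ¬ IsTwoCoboundary f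

/-- The generators. -/
inductive Gen | a | a1 | a2 | a3 | a4 | b

open FreeGroup

/-- The commutator `[x,y] = x⁻¹y⁻¹xy`. -/
def c (x y : FreeGroup Gen) : FreeGroup Gen := x⁻¹ * y⁻¹ * x * y

/-- The defining relators. -/
def rels (p : ℕ) : Set (FreeGroup Gen) :=
  { c (of .a1) (of .a) * (of Gen.a2)⁻¹,
    c (of .a2) (of .a) * (of Gen.a3)⁻¹,
    c (of .a3) (of .a) * (of Gen.a4)⁻¹,
    c (of .a1) (of .b) * (of Gen.a4)⁻¹,
    c (of .a) (of .a4),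
    c (of .a) (of .b),
    c (of .a1) (of .a2),
    c (of .a1) (of .a3),
    c (of .a1) (of .a4),
    c (of .a2) (of .a3),
    c (of .a2) (of .a4),
    c (of .a2) (of .b),
    c (of .a3) (of .a4),
    c (of .a3) (of .b),
    c (of .a4) (of .b),
    (of Gen.a) ^ p,
    (of Gen.b) ^ p,
    (of Gen.a1) ^ p * (of Gen.a2) ^ (p.choose 2) * (of Gen.a3) ^ (p.choose 3) * (of Gen.a4) ^ (p.choose 4),
    (of Gen.a2) ^ p * (of Gen.a3) ^ (p.choose 2) * (of Gen.a4) ^ (p.choose 3),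
    (of Gen.a3) ^ p * (of Gen.a4) ^ (p.choose 2),
    (of Gen.a4) ^ p }

/-! ### Auxiliary lemmas -/

/-- `ℚ/ℤ` is divisible. -/
lemma qz_div {n : ℕ} (hn : (n:ℚ) ≠ 0) (v : QZ) : ∃ u : QZ, n • u = v := by
  obtain ⟨q, rfl⟩ := QuotientAddGroup.mk_surjective v
  refine ⟨QuotientAddGroup.mk (q / n), ?_⟩
  have : (QuotientAddGroup.mk (n • (q / n) : ℚ) : QZ) = QuotientAddGroup.mk q := by
    congr 1
    rw [nsmul_eq_mul]
    field_simp
  rw [← this]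
  rfl

lemma comm_of_rel {H : Type*} [Group H] {x y : H} (h : x⁻¹*y⁻¹*x*y = 1) : x*y = y*x := by
  calc x*y = (y*x)*(x⁻¹*y⁻¹*x*y) := by group
  _ = y*x := by rw [h, mul_one]

lemma rel_of_comm {H : Type*} [Group H] {x y : H} (h : x*y = y*x) : x⁻¹*y⁻¹*x*y = 1 := by
  calc x⁻¹*y⁻¹*x*y = x⁻¹*y⁻¹*(x*y) := by group
  _ = x⁻¹*y⁻¹*(y*x) := by rw [h]
  _ = 1 := by group

lemma swap_of_rel {H : Type*} [Group H] {x y z : H} (h : x⁻¹*y⁻¹*x*y = z) : y⁻¹*x*y = x*z := by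
  rw [← h]; group

lemma pw_swap {H : Type*} [Group H] {x y : H} (h : x*y = y*x) (T : H) : x*(y*T) = y*(x*T) := by
  rw [← mul_assoc, h, mul_assoc]

/-- The subgroup generated by two commuting elements is abelian. -/
lemma closure_pair_comm {G : Type} [Group G] {x y : G} (h : x*y = y*x) :
    ∀ u v : (Subgroup.closure ({x,y} : Set G)), u * v = v * u := by
  intro u v
  have hv : ∀ z ∈ Subgroup.closure ({x,y} : Set G), z ∈ Subgroup.centralizer {x,y} := by
    intro z hz
    refine (Subgroup.closure_le _).2 ?_ hz
    rintro w (rfl|rfl) <;>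
      simp only [SetLike.mem_coe, Subgroup.mem_centralizer_iff] <;> rintro g (rfl|rfl)
    · rfl
    · exact h.symm
    · exact h
    · rfl
  have hv' := hv v v.2
  have hu : (u : G) ∈ Subgroup.centralizer {(v : G)} := by
    refine (Subgroup.closure_le _).2 ?_ u.2
    rintro w (rfl|rfl) <;> simp only [SetLike.mem_coe, Subgroup.mem_centralizer_iff]
    · rintro g rfl
      exact (Subgroup.mem_centralizer_iff.1 hv' w (by simp)).symm
    · rintro g rfl
      exact (Subgroup.mem_centralizer_iff.1 hv' w (by simp)).symm
  have := Subgroup.mem_centralizer_iff.1 hu (v : G) (by simp)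
  exact Subtype.ext this.symm

/-- If the restriction of `f` to every bicyclic subgroup is a coboundary, then `f` is
symmetric on commuting pairs. -/
lemma sym_of_res {G : Type} [Group G] (f : G → G → QZ)
    (hres : ∀ A : Subgroup G, IsBicyclic A → IsTwoCoboundary (fun a b : ↥A => f ↑a ↑b))
    {x y : G} (h : x*y = y*x) : f x y = f y x := by
  set A := Subgroup.closure ({x,y} : Set G) with hA
  have hbi : IsBicyclic A := ⟨closure_pair_comm h, x, y, rfl⟩
  obtain ⟨cc, hcc⟩ := hres A hbi
  have hx : x ∈ A := Subgroup.subset_closure (by simp)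
  have hy : y ∈ A := Subgroup.subset_closure (by simp)
  have e1 := hcc ⟨x, hx⟩ ⟨y, hy⟩
  have e2 := hcc ⟨y, hy⟩ ⟨x, hx⟩
  have hxy : (⟨x, hx⟩ : A) * ⟨y, hy⟩ = ⟨y, hy⟩ * ⟨x, hx⟩ := Subtype.ext h
  rw [hxy] at e1
  simp only at e1 e2
  rw [e1, e2]
  abel

/-- Conjugation chain formula for a unipotent-like action. -/
lemma chain4 {H : Type} [Group H] (a x1 x2 x3 x4 : H)
    (h12 : a⁻¹*x1*a = x1*x2) (h23 : a⁻¹*x2*a = x2*x3) (h34 : a⁻¹*x3*a = x3*x4)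
    (h4 : a⁻¹*x4*a = x4) (c23 : x2*x3 = x3*x2) (c34 : x3*x4 = x4*x3) :
    ∀ k : ℕ, (a^k)⁻¹ * x1 * a^k = x1 * x2^k * x3^(k.choose 2) * x4^(k.choose 3) := by
  have hconjmul : ∀ u v : H, a⁻¹*(u*v)*a = (a⁻¹*u*a)*(a⁻¹*v*a) := fun u v => by group
  have hconjpow : ∀ (u : H) (n:ℕ), a⁻¹*u^n*a = (a⁻¹*u*a)^n := by
    intro u n
    induction n with
    | zero => simp
    | succ n ih => rw [pow_succ, hconjmul, ih, ← pow_succ]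
  intro k
  induction k with
  | zero => simp
  | succ n ih =>
    have step : (a^(n+1))⁻¹ * x1 * a^(n+1) = a⁻¹*((a^n)⁻¹ * x1 * a^n)*a := by
      rw [pow_succ]; group
    have hc23 : Commute x2 x3 := c23
    have hc34 : Commute x3 x4 := c34
    have e2 : (n+1).choose 2 = n + n.choose 2 := by
      rw [Nat.choose_succ_succ, Nat.choose_one_right]
    have e3 : (n+1).choose 3 = n.choose 2 + n.choose 3 := Nat.choose_succ_succ n 2
    rw [step, ih, hconjmul, hconjmul, hconjmul, hconjpow, hconjpow, hconjpow,
      h12, h23, h34, h4, hc23.mul_pow, hc34.mul_pow, e2, e3,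
      pow_succ' x2 n, pow_add x3 n (n.choose 2), pow_add x4 (n.choose 2) (n.choose 3)]
    simp only [mul_assoc]

/-- If `[A3,A]=A4`, `[A1,B]=A4` and `A4` commutes with `A,B`, `[A,B]=[A1,A3]=1`,
then `A1*A` and `A3*B` commute. -/
lemma cp_pair_comm {H : Type*} [Group H] {A A1 A3 A4 B : H}
    (h34 : A⁻¹*A3*A = A3*A4) (h1b : B⁻¹*A1*B = A1*A4)
    (cAB : A*B = B*A) (c13 : A1*A3 = A3*A1) (c4B : A4*B = B*A4) (c4A : A4*A = A*A4) :
    (A1*A)*(A3*B) = (A3*B)*(A1*A) := by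
  have hA3A : A3*A = A*(A3*A4) := by rw [← h34]; group
  have hAA3 : ∀ T, A*(A3*T) = A3*(A4⁻¹*(A*T)) := by
    intro T
    have : A*A3 = A3*(A4⁻¹*A) := by
      have e : A*(A3*A4)*A4⁻¹ = A*A3 := by group
      have hinv : A4⁻¹*A = A*A4⁻¹ := ((show Commute A4 A from c4A).inv_left).eq
      rw [← e, ← hA3A, mul_assoc, hinv]
    rw [← mul_assoc, this, mul_assoc, mul_assoc]
  have h1B : ∀ T, A1*(B*T) = B*(A1*(A4*T)) := by
    intro T
    have : A1*B = B*(A1*A4) := by rw [← h1b]; group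
    rw [← mul_assoc, this, mul_assoc, mul_assoc]
  have w13 := pw_swap c13
  have wAB := pw_swap cAB
  have w4B' : ∀ T, A4⁻¹*(B*T) = B*(A4⁻¹*T) := pw_swap ((show Commute A4 B from c4B).inv_left).eq
  have key : ∀ T, A1*(A*(A3*(B*T))) = A3*(B*(A1*(A*T))) := by
    intro T
    rw [hAA3, w13, wAB, w4B', h1B, ← mul_assoc A4, mul_inv_cancel, one_mul]
  have := key 1
  simp only [mul_one] at this
  calc (A1*A)*(A3*B) = A1*(A*(A3*B)) := by group
  _ = A3*(B*(A1*A)) := this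
  _ = (A3*B)*(A1*A) := by group

/-- Conversely: if `A1*A` commutes with `A3*B`, then `[A1,B] = [A3,A]`. -/
lemma lambda_of_cp {H : Type*} [Group H] {A A1 A3 A4 B : H}
    (h34 : A⁻¹*A3*A = A3*A4)
    (cAB : A*B = B*A) (c13 : A1*A3 = A3*A1) (c4B : A4*B = B*A4) (c4A : A4*A = A*A4)
    (hcp : (A1*A)*(A3*B) = (A3*B)*(A1*A)) : B⁻¹*A1*B = A1*A4 := by
  have hA3A : A3*A = A*(A3*A4) := by rw [← h34]; group
  have hAA3 : ∀ T, A*(A3*T) = A3*(A4⁻¹*(A*T)) := by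
    intro T
    have : A*A3 = A3*(A4⁻¹*A) := by
      have e : A*(A3*A4)*A4⁻¹ = A*A3 := by group
      have hinv : A4⁻¹*A = A*A4⁻¹ := ((show Commute A4 A from c4A).inv_left).eq
      rw [← e, ← hA3A, mul_assoc, hinv]
    rw [← mul_assoc, this, mul_assoc, mul_assoc]
  have w13 := pw_swap c13
  have wAB := pw_swap cAB
  have w4B' : ∀ T, A4⁻¹*(B*T) = B*(A4⁻¹*T) := pw_swap ((show Commute A4 B from c4B).inv_left).eq
  have hcp' : A1*(A*(A3*(B*1))) = A3*(B*(A1*(A*1))) := by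
    simp only [mul_one]
    calc A1*(A*(A3*B)) = (A1*A)*(A3*B) := by group
    _ = (A3*B)*(A1*A) := hcp
    _ = A3*(B*(A1*A)) := by group
  rw [hAA3, w13, wAB, w4B'] at hcp'
  have e := mul_left_cancel hcp'
  simp only [mul_one] at e
  have e2 : (A1*(B*A4⁻¹))*A = (B*A1)*A := by
    calc (A1*(B*A4⁻¹))*A = A1*(B*(A4⁻¹*A)) := by group
    _ = (B*A1)*A := by rw [e]; group
  have key2 : A1*(B*A4⁻¹) = B*A1 := mul_right_cancel e2
  calc B⁻¹*A1*B = B⁻¹*((A1*(B*A4⁻¹))*A4) := by group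
  _ = B⁻¹*((B*A1)*A4) := by rw [key2]
  _ = A1*A4 := by group

set_option maxHeartbeats 1000000 in
theorem bogomolov_trivial_Phi24 (p : ℕ) (hp : p.Prime) (h3 : 3 < p)
    (hcard : Nat.card (PresentedGroup (rels p)) = p ^ 6) :
    BogomolovMultiplierIsTrivial (PresentedGroup (rels p)) := by
  intro f hf hres
  have hp0 : ((p:ℕ):ℚ) ≠ 0 := Nat.cast_ne_zero.2 hp.ne_zero
  -- ## Step 1: relations in G
  set F := PresentedGroup.mk (rels p) with hF
  have R : ∀ r ∈ rels p, F r = 1 :=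
    fun r hr => (QuotientGroup.eq_one_iff r).2 (Subgroup.subset_normalClosure hr)
  obtain ⟨ga, hga⟩ : ∃ x, F (FreeGroup.of Gen.a) = x := ⟨_, rfl⟩
  obtain ⟨ga1, hga1⟩ : ∃ x, F (FreeGroup.of Gen.a1) = x := ⟨_, rfl⟩
  obtain ⟨ga2, hga2⟩ : ∃ x, F (FreeGroup.of Gen.a2) = x := ⟨_, rfl⟩
  obtain ⟨ga3, hga3⟩ : ∃ x, F (FreeGroup.of Gen.a3) = x := ⟨_, rfl⟩
  obtain ⟨ga4, hga4⟩ : ∃ x, F (FreeGroup.of Gen.a4) = x := ⟨_, rfl⟩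
  obtain ⟨gb, hgb⟩ : ∃ x, F (FreeGroup.of Gen.b) = x := ⟨_, rfl⟩
  have m1 : ga1⁻¹*ga⁻¹*ga1*ga*ga2⁻¹ = 1 := by
    have h := R (c (of Gen.a1) (of Gen.a) * (of Gen.a2)⁻¹) (Set.mem_insert _ _)
    simpa only [c, _root_.map_mul, _root_.map_inv, hga, hga1, hga2] using h
  have m2 : ga2⁻¹*ga⁻¹*ga2*ga*ga3⁻¹ = 1 := by
    have h := R (c (of Gen.a2) (of Gen.a) * (of Gen.a3)⁻¹) (Set.mem_insert_of_mem _ (Set.mem_insert _ _))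
    simpa only [c, _root_.map_mul, _root_.map_inv, hga, hga2, hga3] using h
  have m3 : ga3⁻¹*ga⁻¹*ga3*ga*ga4⁻¹ = 1 := by
    have h := R (c (of Gen.a3) (of Gen.a) * (of Gen.a4)⁻¹) (Set.mem_insert_of_mem _ (Set.mem_insert_of_mem _ (Set.mem_insert _ _)))
    simpa only [c, _root_.map_mul, _root_.map_inv, hga, hga3, hga4] using h
  have m4 : ga1⁻¹*gb⁻¹*ga1*gb*ga4⁻¹ = 1 := by
    have h := R (c (of Gen.a1) (of Gen.b) * (of Gen.a4)⁻¹) (Set.mem_insert_of_mem _ (Set.mem_insert_of_mem _ (Set.mem_insert_of_mem _ (Set.mem_insert _ _))))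
    simpa only [c, _root_.map_mul, _root_.map_inv, hgb, hga1, hga4] using h
  have m5 : ga⁻¹*ga4⁻¹*ga*ga4 = 1 := by
    have h := R (c (of Gen.a) (of Gen.a4)) (Set.mem_insert_of_mem _ (Set.mem_insert_of_mem _ (Set.mem_insert_of_mem _ (Set.mem_insert_of_mem _ (Set.mem_insert _ _)))))
    simpa only [c, _root_.map_mul, _root_.map_inv, hga, hga4] using h
  have m6 : ga⁻¹*gb⁻¹*ga*gb = 1 := by
    have h := R (c (of Gen.a) (of Gen.b)) (Set.mem_insert_of_mem _ (Set.mem_insert_of_mem _ (Set.mem_insert_of_mem _ (Set.mem_insert_of_mem _ (Set.mem_insert_of_mem _ (Set.mem_insert _ _))))))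
    simpa only [c, _root_.map_mul, _root_.map_inv, hga, hgb] using h
  have m7 : ga1⁻¹*ga2⁻¹*ga1*ga2 = 1 := by
    have h := R (c (of Gen.a1) (of Gen.a2)) (Set.mem_insert_of_mem _ (Set.mem_insert_of_mem _ (Set.mem_insert_of_mem _ (Set.mem_insert_of_mem _ (Set.mem_insert_of_mem _ (Set.mem_insert_of_mem _ (Set.mem_insert _ _)))))))
    simpa only [c, _root_.map_mul, _root_.map_inv, hga1, hga2] using h
  have m8 : ga1⁻¹*ga3⁻¹*ga1*ga3 = 1 := by
    have h := R (c (of Gen.a1) (of Gen.a3)) (Set.mem_insert_of_mem _ (Set.mem_insert_of_mem _ (Set.mem_insert_of_mem _ (Set.mem_insert_of_mem _ (Set.mem_insert_of_mem _ (Set.mem_insert_of_mem _ (Set.mem_insert_of_mem _ (Set.mem_insert _ _))))))))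
    simpa only [c, _root_.map_mul, _root_.map_inv, hga1, hga3] using h
  have m9 : ga1⁻¹*ga4⁻¹*ga1*ga4 = 1 := by
    have h := R (c (of Gen.a1) (of Gen.a4)) (Set.mem_insert_of_mem _ (Set.mem_insert_of_mem _ (Set.mem_insert_of_mem _ (Set.mem_insert_of_mem _ (Set.mem_insert_of_mem _ (Set.mem_insert_of_mem _ (Set.mem_insert_of_mem _ (Set.mem_insert_of_mem _ (Set.mem_insert _ _)))))))))
    simpa only [c, _root_.map_mul, _root_.map_inv, hga1, hga4] using h
  have m10 : ga2⁻¹*ga3⁻¹*ga2*ga3 = 1 := by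
    have h := R (c (of Gen.a2) (of Gen.a3)) (Set.mem_insert_of_mem _ (Set.mem_insert_of_mem _ (Set.mem_insert_of_mem _ (Set.mem_insert_of_mem _ (Set.mem_insert_of_mem _ (Set.mem_insert_of_mem _ (Set.mem_insert_of_mem _ (Set.mem_insert_of_mem _ (Set.mem_insert_of_mem _ (Set.mem_insert _ _))))))))))
    simpa only [c, _root_.map_mul, _root_.map_inv, hga2, hga3] using h
  have m11 : ga2⁻¹*ga4⁻¹*ga2*ga4 = 1 := by
    have h := R (c (of Gen.a2) (of Gen.a4)) (Set.mem_insert_of_mem _ (Set.mem_insert_of_mem _ (Set.mem_insert_of_mem _ (Set.mem_insert_of_mem _ (Set.mem_insert_of_mem _ (Set.mem_insert_of_mem _ (Set.mem_insert_of_mem _ (Set.mem_insert_of_mem _ (Set.mem_insert_of_mem _ (Set.mem_insert_of_mem _ (Set.mem_insert _ _)))))))))))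
    simpa only [c, _root_.map_mul, _root_.map_inv, hga2, hga4] using h
  have m12 : ga2⁻¹*gb⁻¹*ga2*gb = 1 := by
    have h := R (c (of Gen.a2) (of Gen.b)) (Set.mem_insert_of_mem _ (Set.mem_insert_of_mem _ (Set.mem_insert_of_mem _ (Set.mem_insert_of_mem _ (Set.mem_insert_of_mem _ (Set.mem_insert_of_mem _ (Set.mem_insert_of_mem _ (Set.mem_insert_of_mem _ (Set.mem_insert_of_mem _ (Set.mem_insert_of_mem _ (Set.mem_insert_of_mem _ (Set.mem_insert _ _))))))))))))
    simpa only [c, _root_.map_mul, _root_.map_inv, hga2, hgb] using h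
  have m13 : ga3⁻¹*ga4⁻¹*ga3*ga4 = 1 := by
    have h := R (c (of Gen.a3) (of Gen.a4)) (Set.mem_insert_of_mem _ (Set.mem_insert_of_mem _ (Set.mem_insert_of_mem _ (Set.mem_insert_of_mem _ (Set.mem_insert_of_mem _ (Set.mem_insert_of_mem _ (Set.mem_insert_of_mem _ (Set.mem_insert_of_mem _ (Set.mem_insert_of_mem _ (Set.mem_insert_of_mem _ (Set.mem_insert_of_mem _ (Set.mem_insert_of_mem _ (Set.mem_insert _ _)))))))))))))
    simpa only [c, _root_.map_mul, _root_.map_inv, hga3, hga4] using h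
  have m14 : ga3⁻¹*gb⁻¹*ga3*gb = 1 := by
    have h := R (c (of Gen.a3) (of Gen.b)) (Set.mem_insert_of_mem _ (Set.mem_insert_of_mem _ (Set.mem_insert_of_mem _ (Set.mem_insert_of_mem _ (Set.mem_insert_of_mem _ (Set.mem_insert_of_mem _ (Set.mem_insert_of_mem _ (Set.mem_insert_of_mem _ (Set.mem_insert_of_mem _ (Set.mem_insert_of_mem _ (Set.mem_insert_of_mem _ (Set.mem_insert_of_mem _ (Set.mem_insert_of_mem _ (Set.mem_insert _ _))))))))))))))
    simpa only [c, _root_.map_mul, _root_.map_inv, hga3, hgb] using h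
  have m15 : ga4⁻¹*gb⁻¹*ga4*gb = 1 := by
    have h := R (c (of Gen.a4) (of Gen.b)) (Set.mem_insert_of_mem _ (Set.mem_insert_of_mem _ (Set.mem_insert_of_mem _ (Set.mem_insert_of_mem _ (Set.mem_insert_of_mem _ (Set.mem_insert_of_mem _ (Set.mem_insert_of_mem _ (Set.mem_insert_of_mem _ (Set.mem_insert_of_mem _ (Set.mem_insert_of_mem _ (Set.mem_insert_of_mem _ (Set.mem_insert_of_mem _ (Set.mem_insert_of_mem _ (Set.mem_insert_of_mem _ (Set.mem_insert _ _)))))))))))))))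
    simpa only [c, _root_.map_mul, _root_.map_inv, hga4, hgb] using h
  have pG_a : ga^p = 1 := by
    have h := R ((of Gen.a)^p) (Set.mem_insert_of_mem _ (Set.mem_insert_of_mem _ (Set.mem_insert_of_mem _ (Set.mem_insert_of_mem _ (Set.mem_insert_of_mem _ (Set.mem_insert_of_mem _ (Set.mem_insert_of_mem _ (Set.mem_insert_of_mem _ (Set.mem_insert_of_mem _ (Set.mem_insert_of_mem _ (Set.mem_insert_of_mem _ (Set.mem_insert_of_mem _ (Set.mem_insert_of_mem _ (Set.mem_insert_of_mem _ (Set.mem_insert_of_mem _ (Set.mem_insert _ _))))))))))))))))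
    simpa only [_root_.map_pow, hga] using h
  have pG_b : gb^p = 1 := by
    have h := R ((of Gen.b)^p) (Set.mem_insert_of_mem _ (Set.mem_insert_of_mem _ (Set.mem_insert_of_mem _ (Set.mem_insert_of_mem _ (Set.mem_insert_of_mem _ (Set.mem_insert_of_mem _ (Set.mem_insert_of_mem _ (Set.mem_insert_of_mem _ (Set.mem_insert_of_mem _ (Set.mem_insert_of_mem _ (Set.mem_insert_of_mem _ (Set.mem_insert_of_mem _ (Set.mem_insert_of_mem _ (Set.mem_insert_of_mem _ (Set.mem_insert_of_mem _ (Set.mem_insert_of_mem _ (Set.mem_insert _ _)))))))))))))))))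
    simpa only [_root_.map_pow, hgb] using h
  have pG_1 : ga1^p*ga2^(p.choose 2)*ga3^(p.choose 3)*ga4^(p.choose 4) = 1 := by
    have h := R ((of Gen.a1)^p * (of Gen.a2)^(p.choose 2) * (of Gen.a3)^(p.choose 3)
      * (of Gen.a4)^(p.choose 4)) (Set.mem_insert_of_mem _ (Set.mem_insert_of_mem _ (Set.mem_insert_of_mem _ (Set.mem_insert_of_mem _ (Set.mem_insert_of_mem _ (Set.mem_insert_of_mem _ (Set.mem_insert_of_mem _ (Set.mem_insert_of_mem _ (Set.mem_insert_of_mem _ (Set.mem_insert_of_mem _ (Set.mem_insert_of_mem _ (Set.mem_insert_of_mem _ (Set.mem_insert_of_mem _ (Set.mem_insert_of_mem _ (Set.mem_insert_of_mem _ (Set.mem_insert_of_mem _ (Set.mem_insert_of_mem _ (Set.mem_insert _ _))))))))))))))))))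
    simpa only [_root_.map_mul, _root_.map_pow, hga1, hga2, hga3, hga4] using h
  have eG1 : ga1⁻¹*ga⁻¹*ga1*ga = ga2 := mul_inv_eq_one.mp m1
  have eG2 : ga2⁻¹*ga⁻¹*ga2*ga = ga3 := mul_inv_eq_one.mp m2
  have eG3 : ga3⁻¹*ga⁻¹*ga3*ga = ga4 := mul_inv_eq_one.mp m3
  have eG4 : ga1⁻¹*gb⁻¹*ga1*gb = ga4 := mul_inv_eq_one.mp m4
  have cG_a4a : ga*ga4 = ga4*ga := comm_of_rel m5
  have cG_ab : ga*gb = gb*ga := comm_of_rel m6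
  have cG_12 : ga1*ga2 = ga2*ga1 := comm_of_rel m7
  have cG_13 : ga1*ga3 = ga3*ga1 := comm_of_rel m8
  have cG_14 : ga1*ga4 = ga4*ga1 := comm_of_rel m9
  have cG_23 : ga2*ga3 = ga3*ga2 := comm_of_rel m10
  have cG_24 : ga2*ga4 = ga4*ga2 := comm_of_rel m11
  have cG_2b : ga2*gb = gb*ga2 := comm_of_rel m12
  have cG_34 : ga3*ga4 = ga4*ga3 := comm_of_rel m13
  have cG_3b : ga3*gb = gb*ga3 := comm_of_rel m14
  have cG_4b : ga4*gb = gb*ga4 := comm_of_rel m15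
  have h34G : ga⁻¹*ga3*ga = ga3*ga4 := swap_of_rel eG3
  have h1bG : gb⁻¹*ga1*gb = ga1*ga4 := swap_of_rel eG4
  have gCP : (ga1*ga)*(ga3*gb) = (ga3*gb)*(ga1*ga) :=
    cp_pair_comm h34G h1bG cG_ab cG_13 cG_4b cG_a4a.symm
  -- ## Step 2: basic cocycle facts
  have hone : ∀ g, f 1 g = f 1 1 := by
    intro g
    have h := hf 1 1 g
    simp only [one_mul] at h
    have h2 : f 1 g - f 1 1 = 0 := by rw [← h]; abel
    exact sub_eq_zero.mp h2
  have hgone : ∀ g, f g 1 = f 1 1 := by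
    intro g
    have h := hf g 1 1
    simp only [mul_one] at h
    have h2 : f 1 1 - f g 1 = 0 := by rw [← h]; abel
    exact (sub_eq_zero.mp h2).symm
  have hassoc : ∀ g h j, f g h + f (g * h) j = f h j + f g (h * j) := by
    intro g h j
    rw [← sub_eq_zero]
    calc f g h + f (g * h) j - (f h j + f g (h * j))
        = -(f h j - f (g * h) j + f g (h * j) - f g h) := by abel
    _ = 0 := by rw [hf g h j, neg_zero]
  -- ## Step 3: the central extension E = QZ ×_f G
  letI : Mul (QZ × PresentedGroup (rels p)) :=
    ⟨fun x y => (x.1 + y.1 + f x.2 y.2, x.2 * y.2)⟩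
  letI : One (QZ × PresentedGroup (rels p)) := ⟨(-(f 1 1), 1)⟩
  letI : Inv (QZ × PresentedGroup (rels p)) :=
    ⟨fun x => (-x.1 - f x.2⁻¹ x.2 - f 1 1, x.2⁻¹)⟩
  letI : Group (QZ × PresentedGroup (rels p)) := Group.ofLeftAxioms
    (by
      intro x y z
      refine Prod.ext ?_ (mul_assoc x.2 y.2 z.2)
      show x.1 + y.1 + f x.2 y.2 + z.1 + f (x.2 * y.2) z.2
          = x.1 + (y.1 + z.1 + f y.2 z.2) + f x.2 (y.2 * z.2)
      rw [← sub_eq_zero]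
      calc x.1 + y.1 + f x.2 y.2 + z.1 + f (x.2 * y.2) z.2
            - (x.1 + (y.1 + z.1 + f y.2 z.2) + f x.2 (y.2 * z.2))
          = (f x.2 y.2 + f (x.2 * y.2) z.2) - (f y.2 z.2 + f x.2 (y.2 * z.2)) := by abel
      _ = 0 := by rw [hassoc x.2 y.2 z.2, sub_self]
      )
    (by
      intro x
      refine Prod.ext ?_ (one_mul x.2)
      show -(f 1 1) + x.1 + f 1 x.2 = x.1
      rw [hone x.2]; abel)
    (by
      intro x
      refine Prod.ext ?_ (inv_mul_cancel x.2)
      show -x.1 - f x.2⁻¹ x.2 - f 1 1 + x.1 + f x.2⁻¹ x.2 = -(f 1 1)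
      abel)
  -- the projection homomorphism
  set proj : (QZ × PresentedGroup (rels p)) →* PresentedGroup (rels p) :=
    { toFun := Prod.snd, map_one' := rfl, map_mul' := fun _ _ => rfl } with hproj
  -- the central embedding of QZ
  set emb : QZ → QZ × PresentedGroup (rels p) := fun t => (t - f 1 1, 1) with hemb
  have hembmul : ∀ s t : QZ, emb s * emb t = emb (s + t) := by
    intro s t
    refine Prod.ext ?_ (one_mul 1)
    show (s - f 1 1) + (t - f 1 1) + f 1 1 = (s + t) - f 1 1
    rw [hone 1]
    abel
  have hembzero : emb 0 = 1 := by
    refine Prod.ext ?_ rfl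
    show (0:QZ) - f 1 1 = -(f 1 1)
    abel
  have hcent : ∀ (t : QZ) (x : QZ × PresentedGroup (rels p)), emb t * x = x * emb t := by
    intro t x
    refine Prod.ext ?_ ?_
    · show (t - f 1 1) + x.1 + f 1 x.2 = x.1 + (t - f 1 1) + f x.2 1
      rw [hone x.2, hgone x.2]
      abel
    · show 1 * x.2 = x.2 * 1
      rw [one_mul, mul_one]
  have hembpow : ∀ (n : ℕ) (t : QZ), (emb t)^n = emb (n • t) := by
    intro n t
    induction n with
    | zero => rw [pow_zero, zero_smul, hembzero]
    | succ n ih => rw [pow_succ, ih, hembmul, succ_nsmul]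
  have hker : ∀ x : QZ × PresentedGroup (rels p), x.2 = 1 → x = emb (x.1 + f 1 1) := by
    intro x hx
    refine Prod.ext ?_ hx
    show x.1 = (x.1 + f 1 1) - f 1 1
    abel
  have hCP : ∀ x y : QZ × PresentedGroup (rels p), x.2 * y.2 = y.2 * x.2 → x * y = y * x := by
    intro x y h
    refine Prod.ext ?_ h
    show x.1 + y.1 + f x.2 y.2 = y.1 + x.1 + f y.2 x.2
    rw [sym_of_res f hres h]
    abel
  have hcentK : ∀ (x y : QZ × PresentedGroup (rels p)) (t : QZ),
      (x * emb t)⁻¹ * y⁻¹ * (x * emb t) * y = x⁻¹*y⁻¹*x*y := by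
    intro x y t
    calc (x * emb t)⁻¹ * y⁻¹ * (x * emb t) * y
        = (emb t)⁻¹ * ((x⁻¹ * y⁻¹ * x * (emb t * y))) := by group
    _ = (emb t)⁻¹ * ((x⁻¹ * y⁻¹ * x * (y * emb t))) := by rw [hcent t y]
    _ = (emb t)⁻¹ * ((x⁻¹ * y⁻¹ * x * y) * emb t) := by group
    _ = (emb t)⁻¹ * (emb t * (x⁻¹ * y⁻¹ * x * y)) := by rw [← hcent t (x⁻¹ * y⁻¹ * x * y)]
    _ = x⁻¹*y⁻¹*x*y := by group
  -- ## Step 4: lifts of the generators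
  have mk_lift : ∀ x : QZ × PresentedGroup (rels p), (x^p).2 = 1 →
      ∃ t : QZ, (x * emb t)^p = 1 := by
    intro x hx
    obtain ⟨t, ht⟩ := qz_div hp0 (-((x^p).1 + f 1 1))
    refine ⟨t, ?_⟩
    have hcomm : Commute x (emb t) := (hcent t x).symm
    rw [hcomm.mul_pow, hembpow, hker (x^p) hx, hembmul, ht, add_neg_cancel, hembzero]
  have hsndpow : ∀ (x : QZ × PresentedGroup (rels p)) (n : ℕ), (x^n).2 = (x.2)^n := by
    intro x n
    show proj (x^n) = (x.2)^n
    rw [_root_.map_pow]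
    rfl
  -- lift of a, normalized so that A^p = 1
  obtain ⟨tA, hApow0⟩ := mk_lift ((0:QZ), ga) (by rw [hsndpow]; exact pG_a)
  obtain ⟨A, hAdef⟩ : ∃ x : QZ × PresentedGroup (rels p), x = ((0:QZ), ga) * emb tA := ⟨_, rfl⟩
  have hApow : A^p = 1 := by rw [hAdef]; exact hApow0
  have hpA : A.2 = ga := by
    rw [hAdef]
    show ga * 1 = ga
    rw [mul_one]
  -- lift of b, normalized so that B^p = 1
  obtain ⟨tB, hBpow0⟩ := mk_lift ((0:QZ), gb) (by rw [hsndpow]; exact pG_b)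
  obtain ⟨B, hBdef⟩ : ∃ x : QZ × PresentedGroup (rels p), x = ((0:QZ), gb) * emb tB := ⟨_, rfl⟩
  have hBpow : B^p = 1 := by rw [hBdef]; exact hBpow0
  have hpB : B.2 = gb := by
    rw [hBdef]
    show gb * 1 = gb
    rw [mul_one]
  -- preliminary lift of a1, and the derived lifts a2, a3, a4
  set A10 : QZ × PresentedGroup (rels p) := ((0:QZ), ga1) with hA10def
  have hpA10 : A10.2 = ga1 := rfl
  obtain ⟨A2, hA2def⟩ : ∃ x : QZ × PresentedGroup (rels p), x = A10⁻¹*A⁻¹*A10*A := ⟨_, rfl⟩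
  obtain ⟨A3, hA3def⟩ : ∃ x : QZ × PresentedGroup (rels p), x = A2⁻¹*A⁻¹*A2*A := ⟨_, rfl⟩
  obtain ⟨A4, hA4def⟩ : ∃ x : QZ × PresentedGroup (rels p), x = A3⁻¹*A⁻¹*A3*A := ⟨_, rfl⟩
  have hsndmul : ∀ x y : QZ × PresentedGroup (rels p), (x*y).2 = x.2 * y.2 := fun _ _ => rfl
  have hsndinv : ∀ x : QZ × PresentedGroup (rels p), (x⁻¹).2 = (x.2)⁻¹ := fun _ => rfl
  have hpA2 : A2.2 = ga2 := by
    rw [hA2def, hsndmul, hsndmul, hsndmul, hsndinv, hsndinv, hpA10, hpA]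
    exact eG1
  have hpA3 : A3.2 = ga3 := by
    rw [hA3def, hsndmul, hsndmul, hsndmul, hsndinv, hsndinv, hpA2, hpA]
    exact eG2
  have hpA4 : A4.2 = ga4 := by
    rw [hA4def, hsndmul, hsndmul, hsndmul, hsndinv, hsndinv, hpA3, hpA]
    exact eG3
  -- commutation facts in E coming from the CP property
  have cE_a4a : A*A4 = A4*A := hCP _ _ (by rw [hpA, hpA4]; exact cG_a4a)
  have cE_ab : A*B = B*A := hCP _ _ (by rw [hpA, hpB]; exact cG_ab)
  have cE_23 : A2*A3 = A3*A2 := hCP _ _ (by rw [hpA2, hpA3]; exact cG_23)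
  have cE_34 : A3*A4 = A4*A3 := hCP _ _ (by rw [hpA3, hpA4]; exact cG_34)
  have cE_2b : A2*B = B*A2 := hCP _ _ (by rw [hpA2, hpB]; exact cG_2b)
  have cE_3b : A3*B = B*A3 := hCP _ _ (by rw [hpA3, hpB]; exact cG_3b)
  have cE_4b : A4*B = B*A4 := hCP _ _ (by rw [hpA4, hpB]; exact cG_4b)
  -- conjugation formulas in E
  have hc12 : A⁻¹*A10*A = A10*A2 := swap_of_rel hA2def.symm
  have hc23 : A⁻¹*A2*A = A2*A3 := swap_of_rel hA3def.symm
  have hc34 : A⁻¹*A3*A = A3*A4 := swap_of_rel hA4def.symm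
  have hc4 : A⁻¹*A4*A = A4 := by
    rw [mul_assoc, ← cE_a4a]
    exact inv_mul_cancel_left A A4
  -- the three power relations in E, via conjugation by A^p = 1
  have cancel1 : ∀ x y : QZ × PresentedGroup (rels p), x = x * y → y = 1 :=
    fun x y h => (mul_left_cancel (show x * 1 = x * y by rw [mul_one, ← h])).symm
  have ch1 := chain4 A A10 A2 A3 A4 hc12 hc23 hc34 hc4 cE_23 cE_34 p
  rw [hApow] at ch1
  have ch1' : A10 = A10 * (A2^p * (A3^(p.choose 2) * A4^(p.choose 3))) := by
    rw [← mul_assoc, ← mul_assoc]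
    rw [inv_one, one_mul, mul_one] at ch1
    exact ch1
  have crel19 : A2^p * (A3^(p.choose 2) * A4^(p.choose 3)) = 1 := cancel1 _ _ ch1'
  have ch2 := chain4 A A2 A3 A4 1 hc23 hc34 (by rw [mul_one]; exact hc4) (by group)
    cE_34 (by rw [mul_one, one_mul]) p
  rw [hApow] at ch2
  have ch2' : A2 = A2 * (A3^p * A4^(p.choose 2)) := by
    rw [inv_one, one_mul, mul_one, one_pow, mul_one, mul_assoc] at ch2
    exact ch2
  have crel20 : A3^p * A4^(p.choose 2) = 1 := cancel1 _ _ ch2'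
  have ch3 := chain4 A A3 A4 1 1 hc34 (by rw [mul_one]; exact hc4) (by group) (by group)
    (by rw [mul_one, one_mul]) (by rw [one_mul]) p
  rw [hApow] at ch3
  have ch3' : A3 = A3 * A4^p := by
    rw [inv_one, one_mul, mul_one, one_pow, mul_one, one_pow, mul_one] at ch3
    exact ch3
  have crel21 : A4^p = 1 := cancel1 _ _ ch3'
  -- the fourth relator: [A10, B] = A4, via the CP property for (a1*a, a3*b)
  have hcpE : (A10*A)*(A3*B) = (A3*B)*(A10*A) := by
    refine hCP _ _ ?_
    rw [hsndmul, hsndmul, hpA10, hpA, hpA3, hpB]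
    exact gCP
  have hlam : B⁻¹*A10*B = A10*A4 := lambda_of_cp hc34 cE_ab
    (hCP _ _ (by rw [hpA10, hpA3]; exact cG_13)) cE_4b cE_a4a.symm hcpE
  -- the normalized lift of a1
  have hr18snd : (A10^p * A2^(p.choose 2) * A3^(p.choose 3) * A4^(p.choose 4)).2 = 1 := by
    rw [hsndmul, hsndmul, hsndmul, hsndpow, hsndpow, hsndpow, hsndpow,
      hpA10, hpA2, hpA3, hpA4]
    exact pG_1
  obtain ⟨t1, ht1⟩ := qz_div hp0
    (-(((A10^p * A2^(p.choose 2) * A3^(p.choose 3) * A4^(p.choose 4)).1) + f 1 1))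
  obtain ⟨A1, hA1def⟩ : ∃ x : QZ × PresentedGroup (rels p), x = A10 * emb t1 := ⟨_, rfl⟩
  have hpA1 : A1.2 = ga1 := by
    rw [hA1def, hsndmul, hpA10]
    show ga1 * 1 = ga1
    rw [mul_one]
  have hA1K : A1⁻¹*A⁻¹*A1*A = A2 := by
    rw [hA1def, hcentK A10 A t1]
    exact hA2def.symm
  have hrel18E : A1^p * A2^(p.choose 2) * A3^(p.choose 3) * A4^(p.choose 4) = 1 := by
    have hcomm : Commute A10 (emb t1) := (hcent t1 A10).symm
    have hA1p : A1^p = A10^p * emb ((p:ℕ) • t1) := by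
      rw [hA1def, hcomm.mul_pow, hembpow]
    have hmove : A10^p * emb ((p:ℕ) • t1) * A2^(p.choose 2) * A3^(p.choose 3) * A4^(p.choose 4)
        = (A10^p * A2^(p.choose 2) * A3^(p.choose 3) * A4^(p.choose 4)) * emb ((p:ℕ) • t1) := by
      rw [mul_assoc (A10^p), hcent ((p:ℕ) • t1) (A2^(p.choose 2))]
      rw [← mul_assoc, mul_assoc _ (emb _), hcent ((p:ℕ) • t1) (A3^(p.choose 3))]
      rw [← mul_assoc, mul_assoc _ (emb _), hcent ((p:ℕ) • t1) (A4^(p.choose 4))]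
      rw [← mul_assoc]
    rw [hA1p, hmove, hker _ hr18snd, hembmul, ht1, add_neg_cancel, hembzero]
  have hlam1 : A1⁻¹*B⁻¹*A1*B = A4 := by
    rw [hA1def, hcentK A10 B t1]
    rw [show A10⁻¹*B⁻¹*A10*B = A10⁻¹*(B⁻¹*A10*B) by group, hlam]
    exact inv_mul_cancel_left A10 (A4)
  have hc12' : A⁻¹*A1*A = A1*A2 := swap_of_rel hA1K
  -- E-commutations involving A1
  have cE_12 : A1*A2 = A2*A1 := hCP _ _ (by rw [hpA1, hpA2]; exact cG_12)
  have cE_13 : A1*A3 = A3*A1 := hCP _ _ (by rw [hpA1, hpA3]; exact cG_13)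
  have cE_14 : A1*A4 = A4*A1 := hCP _ _ (by rw [hpA1, hpA4]; exact cG_14)
  -- ## Step 5: the splitting homomorphism
  set gm : Gen → QZ × PresentedGroup (rels p) := fun x => match x with
    | .a => A | .a1 => A1 | .a2 => A2 | .a3 => A3 | .a4 => A4 | .b => B with hgm
  have hgm_a : gm Gen.a = A := rfl
  have hgm_a1 : gm Gen.a1 = A1 := rfl
  have hgm_a2 : gm Gen.a2 = A2 := rfl
  have hgm_a3 : gm Gen.a3 = A3 := rfl
  have hgm_a4 : gm Gen.a4 = A4 := rfl
  have hgm_b : gm Gen.b = B := rfl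
  have hrels : ∀ r ∈ rels p, FreeGroup.lift gm r = 1 := by
    intro r hr
    simp only [rels, Set.mem_insert_iff, Set.mem_singleton_iff] at hr
    rcases hr with rfl|rfl|rfl|rfl|rfl|rfl|rfl|rfl|rfl|rfl|rfl|rfl|rfl|rfl|rfl|rfl|rfl|rfl|rfl|rfl|rfl
    all_goals simp only [c, _root_.map_mul, _root_.map_inv, _root_.map_pow, FreeGroup.lift_apply_of,
      hgm_a, hgm_a1, hgm_a2, hgm_a3, hgm_a4, hgm_b]
    · rw [hA1K]; exact mul_inv_cancel A2
    · rw [← hA3def]; exact mul_inv_cancel A3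
    · rw [← hA4def]; exact mul_inv_cancel A4
    · rw [hlam1]; exact mul_inv_cancel A4
    · exact rel_of_comm cE_a4a
    · exact rel_of_comm cE_ab
    · exact rel_of_comm cE_12
    · exact rel_of_comm cE_13
    · exact rel_of_comm cE_14
    · exact rel_of_comm cE_23
    · exact rel_of_comm (hCP _ _ (by rw [hpA2, hpA4]; exact cG_24))
    · exact rel_of_comm cE_2b
    · exact rel_of_comm cE_34
    · exact rel_of_comm cE_3b
    · exact rel_of_comm cE_4b
    · exact hApow
    · exact hBpow
    · exact hrel18E
    · simp only [mul_assoc]; exact crel19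
    · exact crel20
    · exact crel21
  set ψ : PresentedGroup (rels p) →* QZ × PresentedGroup (rels p) :=
    PresentedGroup.toGroup hrels with hψ
  have hsec : ∀ g : PresentedGroup (rels p), (ψ g).2 = g := by
    have hcomp : proj.comp ψ = MonoidHom.id (PresentedGroup (rels p)) := by
      apply PresentedGroup.ext
      intro x
      rw [MonoidHom.comp_apply, MonoidHom.id_apply, hψ, PresentedGroup.toGroup.of]
      cases x
      · show A.2 = _; rw [hpA]; exact hga.symm
      · show A1.2 = _; rw [hpA1]; exact hga1.symm
      · show A2.2 = _; rw [hpA2]; exact hga2.symm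
      · show A3.2 = _; rw [hpA3]; exact hga3.symm
      · show A4.2 = _; rw [hpA4]; exact hga4.symm
      · show B.2 = _; rw [hpB]; exact hgb.symm
    intro g
    have := DFunLike.congr_fun hcomp g
    exact this
  -- ## Step 6: extract the coboundary
  refine ⟨fun g => -(ψ g).1, ?_⟩
  intro g h
  show f g h = -(ψ h).1 - -(ψ (g*h)).1 + -(ψ g).1
  have key : (ψ (g*h)).1 = (ψ g).1 + (ψ h).1 + f g h := by
    have h1 : ψ (g*h) = ψ g * ψ h := _root_.map_mul ψ g h
    have h2 : (ψ g * ψ h).1 = (ψ g).1 + (ψ h).1 + f (ψ g).2 (ψ h).2 := rfl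
    rw [h1, h2, hsec g, hsec h]
  rw [key]
  abel

end Stmt4
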